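/- arXiv:2304.03426 — 3 statements merged into one kernel-verified Lean document; each statement's English description precedes it below -/
import Mathlib

section
/- Let K = {x ∈ ℝ^n : Ax ≥ b} be a bounded polytope with nonempty interior, where A ∈ ℝ^{m×n} has rows a_1ᵀ,…,a_mᵀ and b ∈ ℝ^m, and let vc(K) denote its volumetric center, i.e., the minimizer of F(x) = (1/2) ln det H(x) over the interior of K. Then K ⊆ 2 m^{3/2} n · E(vc(K), H(vc(K))); that is, every y ∈ K satisfies (y − vc(K))ᵀ H(vc(K)) (y − vc(K)) ≤ 4 m³ n². -/
/-!
Write `H = H(vc)`, `sᵢ = aᵢᵀvc - bᵢ`, `σᵢ = aᵢᵀH⁻¹aᵢ / sᵢ²` (the leverage scores, with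
`∑ σᵢ = n`) and `tᵢ = aᵢᵀ(y - vc) / sᵢ ≥ -1`. Then `S := (y - vc)ᵀH(y - vc) = ∑ tᵢ²` and, by
Cauchy–Schwarz, `tᵢ² ≤ σᵢ S`.

Concavity of `log det` turns the minimality of `F` at `vc` into `n ≤ tr(H⁻¹H(x))` for every
interior `x`. Along the line `x = vc + ε(y - vc)` the right-hand side equals `n` at `ε = 0`, so its
derivative vanishes there, which says `∑ σᵢtᵢ = 0`. Hence the positive parts `pᵢ = tᵢ⁺` satisfy
`∑ σᵢpᵢ = ∑ σᵢtᵢ⁻ ≤ n`, so `∑ pᵢ³ ≤ ∑ σᵢpᵢS ≤ nS`. The power-mean inequality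
`(∑ pᵢ²)³ ≤ m (∑ pᵢ³)²` and `∑ pᵢ² ≥ S - m` (as `tᵢ⁻ ≤ 1`) then force `S ≤ 4m³n²`.
-/

open Matrix

/-- The Hessian of the log-barrier of the polytope `{x | A x ≥ b}` at the point `x`:
`H(x) = ∑ i, aᵢ aᵢᵀ / (aᵢᵀ x - bᵢ)²`. -/
noncomputable def Hmat {m n : ℕ} (A : Matrix (Fin m) (Fin n) ℝ) (b : Fin m → ℝ)
    (x : Fin n → ℝ) : Matrix (Fin n) (Fin n) ℝ :=
  ∑ i, ((A i ⬝ᵥ x - b i) ^ 2)⁻¹ • Matrix.vecMulVec (A i) (A i)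

/-- The volumetric function `F(x) = (1/2) ln det H(x)`. -/
noncomputable def Fvol {m n : ℕ} (A : Matrix (Fin m) (Fin n) ℝ) (b : Fin m → ℝ)
    (x : Fin n → ℝ) : ℝ :=
  (1 / 2) * Real.log (Hmat A b x).det

namespace Matrix

variable {ι : Type*} [Fintype ι]

theorem PosDef.log_det_le_trace_sub_card [DecidableEq ι] {X : Matrix ι ι ℝ} (hX : X.PosDef) :
    Real.log X.det ≤ X.trace - Fintype.card ι := by
  have heig := hX.eigenvalues_pos
  rw [hX.1.det_eq_prod_eigenvalues, hX.1.trace_eq_sum_eigenvalues]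
  simp only [RCLike.ofReal_real_eq_id, id]
  rw [Real.log_prod fun i _ => (heig i).ne']
  calc ∑ i, Real.log (hX.1.eigenvalues i) ≤ ∑ i, (hX.1.eigenvalues i - 1) :=
        Finset.sum_le_sum fun i _ => Real.log_le_sub_one_of_pos (heig i)
    _ = _ := by simp [Finset.sum_sub_distrib]

open scoped MatrixOrder in
/-- Concavity of `log det`: its graph lies below its tangent plane at `P`. -/
theorem PosDef.log_det_le_log_det_add_trace [DecidableEq ι] {P Q : Matrix ι ι ℝ} (hP : P.PosDef)
    (hQ : Q.PosDef) : Real.log Q.det ≤ Real.log P.det + ((P⁻¹ * Q).trace - Fintype.card ι) := by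
  obtain ⟨B, hB⟩ := CStarAlgebra.nonneg_iff_eq_star_mul_self.mp hP.inv.posSemidef.nonneg
  rw [star_eq_conjTranspose] at hB
  have hBunit : IsUnit B := by
    refine (isUnit_iff_isUnit_det B).2 (isUnit_iff_ne_zero.2 fun h => ?_)
    have := hP.inv.det_pos
    rw [hB, det_mul, h, mul_zero] at this
    exact lt_irrefl _ this
  have hX : (B * Q * Bᴴ).PosDef :=
    hQ.mul_mul_conjTranspose_same (vecMul_injective_iff_isUnit.2 hBunit)
  have hdet : (B * Q * Bᴴ).det = P.det⁻¹ * Q.det := by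
    rw [← Ring.inverse_eq_inv', ← det_nonsing_inv, hB, det_mul, det_mul, det_mul]
    ring
  have htrace : (B * Q * Bᴴ).trace = (P⁻¹ * Q).trace := by
    rw [trace_mul_cycle, hB, mul_assoc]
  have := hX.log_det_le_trace_sub_card
  rw [hdet, htrace, Real.log_mul (inv_pos.2 hP.det_pos).ne' hQ.det_pos.ne', Real.log_inv] at this
  linarith

theorem IsHermitian.dotProduct_mulVec_comm {M : Matrix ι ι ℝ} (hM : M.IsHermitian) (u v : ι → ℝ) :
    u ⬝ᵥ M *ᵥ v = v ⬝ᵥ M *ᵥ u := by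
  rw [dotProduct_mulVec, dotProduct_comm, ← mulVec_transpose,
    ← conjTranspose_eq_transpose_of_trivial, hM.eq]

theorem PosSemidef.dotProduct_mulVec_sq_le {M : Matrix ι ι ℝ} (hM : M.PosSemidef) (u v : ι → ℝ) :
    (u ⬝ᵥ M *ᵥ v) ^ 2 ≤ (u ⬝ᵥ M *ᵥ u) * (v ⬝ᵥ M *ᵥ v) := by
  have hsymm := hM.1.dotProduct_mulVec_comm v u
  have hquad : ∀ c : ℝ,
      0 ≤ (v ⬝ᵥ M *ᵥ v) * (c * c) + 2 * (u ⬝ᵥ M *ᵥ v) * c + u ⬝ᵥ M *ᵥ u := fun c => by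
    have := hM.dotProduct_mulVec_nonneg (u + c • v)
    simp only [star_trivial, mulVec_add, mulVec_smul, dotProduct_add, add_dotProduct,
      dotProduct_smul, smul_dotProduct, smul_eq_mul, hsymm] at this
    linarith
  have := discrim_le_zero hquad
  rw [discrim] at this
  linarith

theorem PosDef.dotProduct_sq_le [DecidableEq ι] {H : Matrix ι ι ℝ} (hH : H.PosDef) (a d : ι → ℝ) :
    (a ⬝ᵥ d) ^ 2 ≤ (a ⬝ᵥ H⁻¹ *ᵥ a) * (d ⬝ᵥ H *ᵥ d) := by
  have hHHi : H *ᵥ (H⁻¹ *ᵥ a) = a := by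
    rw [mulVec_mulVec, mul_nonsing_inv _ ((isUnit_iff_isUnit_det H).1 hH.isUnit), one_mulVec]
  have := hH.posSemidef.dotProduct_mulVec_sq_le (H⁻¹ *ᵥ a) d
  rwa [hH.1.dotProduct_mulVec_comm, hHHi, dotProduct_comm d, dotProduct_comm _ a] at this

end Matrix

section Polytope

variable {m n : ℕ} (A : Matrix (Fin m) (Fin n) ℝ) (b : Fin m → ℝ)

theorem dotProduct_Hmat_mulVec_self (x v : Fin n → ℝ) :
    v ⬝ᵥ Hmat A b x *ᵥ v = ∑ i, ((A i ⬝ᵥ v) / (A i ⬝ᵥ x - b i)) ^ 2 := by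
  simp only [Hmat, sum_mulVec, dotProduct_sum, smul_mulVec, vecMulVec_mulVec, dotProduct_smul]
  refine Finset.sum_congr rfl fun i _ => ?_
  simp only [MulOpposite.smul_eq_mul_unop, MulOpposite.unop_op, smul_eq_mul, dotProduct_comm v,
    div_pow]
  ring

theorem trace_mul_Hmat (B : Matrix (Fin n) (Fin n) ℝ) (x : Fin n → ℝ) :
    (B * Hmat A b x).trace = ∑ i, A i ⬝ᵥ B *ᵥ A i / (A i ⬝ᵥ x - b i) ^ 2 := by
  simp only [Hmat, Finset.mul_sum, trace_sum, Matrix.mul_smul, trace_smul, mul_vecMulVec,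
    trace_vecMulVec]
  refine Finset.sum_congr rfl fun i _ => ?_
  rw [smul_eq_mul, dotProduct_comm (B *ᵥ A i), div_eq_inv_mul]

theorem Hmat_posSemidef (x : Fin n → ℝ) : (Hmat A b x).PosSemidef :=
  posSemidef_sum _ fun i _ => (posSemidef_vecMulVec_self_star (A i)).smul (by positivity)

noncomputable def leverageScore (x : Fin n → ℝ) (i : Fin m) : ℝ :=
  A i ⬝ᵥ (Hmat A b x)⁻¹ *ᵥ A i / (A i ⬝ᵥ x - b i) ^ 2

variable {A b}

theorem mulVec_injective_of_isBounded {x₀ : Fin n → ℝ}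
    (hbd : Bornology.IsBounded {x : Fin n → ℝ | ∀ i, b i ≤ A i ⬝ᵥ x})
    (hx₀ : ∀ i, b i ≤ A i ⬝ᵥ x₀) : Function.Injective A.mulVec := by
  refine (injective_iff_map_eq_zero A.mulVecLin).2 fun z hz => ?_
  obtain ⟨C, hC⟩ := isBounded_iff_forall_norm_le.1 hbd
  have hline : ∀ t : ℝ, ‖t • z‖ ≤ C + ‖x₀‖ := fun t => by
    have hmem : ∀ i, b i ≤ A i ⬝ᵥ (x₀ + t • z) := fun i => by
      have : A i ⬝ᵥ z = 0 := congrFun hz i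
      simpa [dotProduct_add, dotProduct_smul, this] using hx₀ i
    calc ‖t • z‖ = ‖(x₀ + t • z) - x₀‖ := by simp
      _ ≤ ‖x₀ + t • z‖ + ‖x₀‖ := norm_sub_le _ _
      _ ≤ C + ‖x₀‖ := by gcongr; exact hC _ hmem
  by_contra hz0
  have := hline ((C + ‖x₀‖ + 1) / ‖z‖)
  rw [norm_smul, Real.norm_eq_abs, abs_div, abs_norm, div_mul_cancel₀ _ (norm_ne_zero_iff.2 hz0)]
    at this
  linarith [le_abs_self (C + ‖x₀‖ + 1)]

theorem Hmat_posDef {x : Fin n → ℝ} (hx : ∀ i, b i < A i ⬝ᵥ x)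
    (hA : Function.Injective A.mulVec) : (Hmat A b x).PosDef := by
  refine .of_dotProduct_mulVec_pos (Hmat_posSemidef A b x).1 fun z hz => ?_
  obtain ⟨i, hi⟩ : ∃ i, A i ⬝ᵥ z ≠ 0 := by
    by_contra! h
    exact hz (hA (funext h |>.trans (mulVec_zero A).symm))
  rw [star_trivial, dotProduct_Hmat_mulVec_self]
  refine Finset.sum_pos' (fun j _ => by positivity) ⟨i, Finset.mem_univ i, ?_⟩
  have := sub_pos.2 (hx i)
  positivity

theorem leverageScore_nonneg {x : Fin n → ℝ} (hH : (Hmat A b x).PosDef) (i : Fin m) :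
    0 ≤ leverageScore A b x i :=
  div_nonneg (by simpa using hH.inv.posSemidef.dotProduct_mulVec_nonneg (A i)) (sq_nonneg _)

theorem sum_leverageScore {x : Fin n → ℝ} (hH : (Hmat A b x).PosDef) :
    ∑ i, leverageScore A b x i = n := by
  simp only [leverageScore]
  rw [← trace_mul_Hmat, nonsing_inv_mul _ ((isUnit_iff_isUnit_det _).1 hH.isUnit), trace_one,
    Fintype.card_fin]

theorem sq_div_slack_le_leverageScore_mul {x : Fin n → ℝ} (hH : (Hmat A b x).PosDef)
    (d : Fin n → ℝ) (i : Fin m) :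
    ((A i ⬝ᵥ d) / (A i ⬝ᵥ x - b i)) ^ 2 ≤ leverageScore A b x i * (d ⬝ᵥ Hmat A b x *ᵥ d) := by
  rw [div_pow, leverageScore, div_mul_eq_mul_div]
  exact div_le_div_of_nonneg_right (hH.dotProduct_sq_le _ _) (sq_nonneg _)

theorem card_le_trace_inv_Hmat_mul {x y : Fin n → ℝ} (hx : (Hmat A b x).PosDef)
    (hy : (Hmat A b y).PosDef) (hxy : Fvol A b x ≤ Fvol A b y) :
    (n : ℝ) ≤ ((Hmat A b x)⁻¹ * Hmat A b y).trace := by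
  have := hx.log_det_le_log_det_add_trace hy
  rw [Fvol, Fvol] at hxy
  rw [Fintype.card_fin] at this
  linarith

theorem isLocalMin_trace_inv_Hmat_mul {vc : Fin n → ℝ} (hvc : ∀ i, b i < A i ⬝ᵥ vc)
    (hA : Function.Injective A.mulVec)
    (hmin : ∀ x : Fin n → ℝ, (∀ i, b i < A i ⬝ᵥ x) → Fvol A b vc ≤ Fvol A b x) (d : Fin n → ℝ) :
    IsLocalMin (fun ε : ℝ => ((Hmat A b vc)⁻¹ * Hmat A b (vc + ε • d)).trace) 0 := by
  have hH := Hmat_posDef hvc hA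
  have hinterior : ∀ᶠ ε in nhds (0 : ℝ), ∀ i, b i < A i ⬝ᵥ (vc + ε • d) := by
    refine Filter.eventually_all.2 fun i => ?_
    simp only [dotProduct_add, dotProduct_smul, smul_eq_mul]
    exact continuousAt_const.eventually_lt (by fun_prop) (by simpa using hvc i)
  filter_upwards [hinterior] with ε hε
  rw [zero_smul, add_zero, nonsing_inv_mul _ ((isUnit_iff_isUnit_det _).1 hH.isUnit), trace_one,
    Fintype.card_fin]
  exact card_le_trace_inv_Hmat_mul hH (Hmat_posDef hε hA) (hmin _ hε)

theorem sum_leverageScore_mul_eq_zero {vc : Fin n → ℝ} (hvc : ∀ i, b i < A i ⬝ᵥ vc)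
    (hA : Function.Injective A.mulVec)
    (hmin : ∀ x : Fin n → ℝ, (∀ i, b i < A i ⬝ᵥ x) → Fvol A b vc ≤ Fvol A b x) (d : Fin n → ℝ) :
    ∑ i, leverageScore A b vc i * ((A i ⬝ᵥ d) / (A i ⬝ᵥ vc - b i)) = 0 := by
  set s : Fin m → ℝ := fun i => A i ⬝ᵥ vc - b i
  set c : Fin m → ℝ := fun i => A i ⬝ᵥ (Hmat A b vc)⁻¹ *ᵥ A i
  set g : ℝ → ℝ := fun ε => ∑ i, c i / (s i + ε * (A i ⬝ᵥ d)) ^ 2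
  have hg : (fun ε : ℝ => ((Hmat A b vc)⁻¹ * Hmat A b (vc + ε • d)).trace) = g := by
    ext ε
    simp only [g, c, s, trace_mul_Hmat, dotProduct_add, dotProduct_smul, smul_eq_mul,
      add_sub_right_comm]
  have hderiv : HasDerivAt g (∑ i, -(2 * c i * (A i ⬝ᵥ d) / s i ^ 3)) 0 := by
    refine HasDerivAt.fun_sum fun i _ => ?_
    have hlin : HasDerivAt (fun ε : ℝ => s i + ε * (A i ⬝ᵥ d)) (A i ⬝ᵥ d) 0 := by
      simpa using ((hasDerivAt_id (0 : ℝ)).mul_const (A i ⬝ᵥ d)).const_add (s i)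
    have hs : s i ≠ 0 := (sub_pos.2 (hvc i)).ne'
    have := ((hlin.fun_pow 2).fun_inv (by simpa using hs)).const_mul (c i)
    simp only [← div_eq_mul_inv] at this
    refine this.congr_deriv ?_
    norm_num
    field_simp
  have hstationary := (hg ▸ isLocalMin_trace_inv_Hmat_mul hvc hA hmin d).hasDerivAt_eq_zero hderiv
  calc ∑ i, leverageScore A b vc i * ((A i ⬝ᵥ d) / s i)
      = -(1 / 2) * ∑ i, -(2 * c i * (A i ⬝ᵥ d) / s i ^ 3) := by
        rw [Finset.mul_sum]
        refine Finset.sum_congr rfl fun i _ => ?_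
        have hs : s i ≠ 0 := (sub_pos.2 (hvc i)).ne'
        rw [show leverageScore A b vc i = c i / s i ^ 2 from rfl]
        field_simp
    _ = 0 := by rw [hstationary, mul_zero]

end Polytope

section

variable {ι : Type*} [Fintype ι]

theorem cube_sum_sq_le_card_mul_sq_sum_cube {p : ι → ℝ} (hp : ∀ i, 0 ≤ p i) :
    (∑ i, p i ^ 2) ^ 3 ≤ Fintype.card ι * (∑ i, p i ^ 3) ^ 2 := by
  set P₁ := ∑ i, p i
  set P₂ := ∑ i, p i ^ 2
  set P₃ := ∑ i, p i ^ 3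
  have h₁₃ : P₂ ^ 2 ≤ P₁ * P₃ :=
    Finset.sum_sq_le_sum_mul_sum_of_sq_le_mul _ (fun i _ => hp i) (fun i _ => pow_nonneg (hp i) 3)
      fun i _ => by ring_nf; rfl
  have h₁₂ : P₁ ^ 2 ≤ Fintype.card ι * P₂ := by
    simpa using sq_sum_le_card_mul_sum_sq (s := Finset.univ) (f := p)
  rcases (show 0 ≤ P₂ by positivity).eq_or_lt with h | hP₂
  · rw [← h, zero_pow three_ne_zero]
    positivity
  refine le_of_mul_le_mul_left ?_ hP₂
  calc P₂ * P₂ ^ 3 = (P₂ ^ 2) ^ 2 := by ring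
    _ ≤ (P₁ * P₃) ^ 2 := pow_le_pow_left₀ (by positivity) h₁₃ 2
    _ = P₁ ^ 2 * P₃ ^ 2 := by ring
    _ ≤ Fintype.card ι * P₂ * P₃ ^ 2 := by gcongr
    _ = P₂ * (Fintype.card ι * P₃ ^ 2) := by ring

theorem sum_mul_posPart_le {σ t : ι → ℝ} {N : ℝ} (hσ : ∀ i, 0 ≤ σ i) (hσN : ∑ i, σ i ≤ N)
    (ht : ∀ i, -1 ≤ t i) (hbal : ∑ i, σ i * t i = 0) : ∑ i, σ i * (t i)⁺ ≤ N := by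
  have hneg : ∑ i, σ i * (t i)⁺ = ∑ i, σ i * (t i)⁻ := by
    rw [← sub_eq_zero, ← Finset.sum_sub_distrib, ← hbal]
    simp only [← mul_sub, posPart_sub_negPart]
  calc ∑ i, σ i * (t i)⁺ = ∑ i, σ i * (t i)⁻ := hneg
    _ ≤ ∑ i, σ i * 1 := by
      gcongr with i
      · exact hσ i
      · exact sup_le (by linarith [ht i]) zero_le_one
    _ ≤ N := by simpa using hσN

theorem le_four_mul_cube_mul_sq_of_cube_le {S P M N : ℝ} (hM : 1 ≤ M) (hN : 1 ≤ N)
    (hP : S - M ≤ P) (hcube : P ^ 3 ≤ M * (N * S) ^ 2) : S ≤ 4 * M ^ 3 * N ^ 2 := by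
  by_contra! hbig
  have hS : 0 < S := lt_of_le_of_lt (by positivity) hbig
  have h4M : 4 * M ≤ 4 * M ^ 3 * N ^ 2 := by
    have : 1 ≤ M ^ 2 * N ^ 2 := one_le_mul_of_one_le_of_one_le (one_le_pow₀ hM) (one_le_pow₀ hN)
    nlinarith
  have h34 : 3 * S < 4 * P := by linarith
  have h27 : 27 * S * S ^ 2 < 64 * M * N ^ 2 * S ^ 2 := by
    have := pow_lt_pow_left₀ h34 (by positivity) three_ne_zero
    nlinarith
  have hS27 : 27 * S < 64 * M * N ^ 2 := lt_of_mul_lt_mul_right h27 (by positivity)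
  nlinarith [mul_le_mul_of_nonneg_left hM (by positivity : (0 : ℝ) ≤ M * N ^ 2)]

theorem sum_sq_le_of_sum_mul_eq_zero {σ t : ι → ℝ} {N : ℝ} (hσ : ∀ i, 0 ≤ σ i)
    (hσN : ∑ i, σ i ≤ N) (ht : ∀ i, -1 ≤ t i) (hbal : ∑ i, σ i * t i = 0)
    (hcs : ∀ i, t i ^ 2 ≤ σ i * ∑ j, t j ^ 2) :
    ∑ i, t i ^ 2 ≤ 4 * Fintype.card ι ^ 3 * N ^ 2 := by
  set S := ∑ i, t i ^ 2
  rcases (show 0 ≤ S by positivity).eq_or_lt with hS | hS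
  · rw [← hS]
    positivity
  have hN : 1 ≤ N := by
    refine (le_mul_iff_one_le_left hS).1 ?_
    calc S ≤ ∑ i, σ i * S := Finset.sum_le_sum fun i _ => hcs i
      _ = (∑ i, σ i) * S := (Finset.sum_mul ..).symm
      _ ≤ N * S := by gcongr
  have hM : (1 : ℝ) ≤ Fintype.card ι := by
    obtain ⟨i, -, -⟩ := Finset.exists_ne_zero_of_sum_ne_zero hS.ne'
    exact Nat.one_le_cast.2 (Fintype.card_pos_iff.2 ⟨i⟩)
  have hposPart : ∀ i, 0 ≤ (t i)⁺ ∧ (t i)⁺ ^ 2 ≤ t i ^ 2 ∧ t i ^ 2 ≤ (t i)⁺ ^ 2 + 1 := fun i => by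
    rcases le_total 0 (t i) with h | h
    · simp [h]
    · rw [posPart_eq_zero.2 h]
      exact ⟨le_rfl, by simpa using sq_nonneg (t i), by nlinarith [ht i]⟩
  have hsq : S - Fintype.card ι ≤ ∑ i, (t i)⁺ ^ 2 := by
    have : S ≤ ∑ i, ((t i)⁺ ^ 2 + 1) := Finset.sum_le_sum fun i _ => (hposPart i).2.2
    simp only [Finset.sum_add_distrib, Finset.sum_const, Finset.card_univ, nsmul_one] at this
    linarith
  have hcube : ∑ i, (t i)⁺ ^ 3 ≤ N * S := by
    calc ∑ i, (t i)⁺ ^ 3 ≤ ∑ i, σ i * (t i)⁺ * S := Finset.sum_le_sum fun i _ => by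
          have := mul_le_mul_of_nonneg_left ((hposPart i).2.1.trans (hcs i)) (hposPart i).1
          nlinarith
      _ = (∑ i, σ i * (t i)⁺) * S := (Finset.sum_mul ..).symm
      _ ≤ N * S := by gcongr; exact sum_mul_posPart_le hσ hσN ht hbal
  exact le_four_mul_cube_mul_sq_of_cube_le hM hN hsq
    ((cube_sum_sq_le_card_mul_sq_sum_cube fun i => (hposPart i).1).trans (by gcongr))

end

/-- A bounded polytope `K = {x | A x ≥ b}` with nonempty interior is contained in
`2 m^{3/2} n · E(vc(K), H(vc(K)))`, where `vc(K)` is the volumetric center: every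
`y ∈ K` satisfies `(y - vc)ᵀ H(vc) (y - vc) ≤ 4 m³ n²`. -/
theorem polytope_subset_dikin_of_volumetric_center {m n : ℕ}
    (A : Matrix (Fin m) (Fin n) ℝ) (b : Fin m → ℝ)
    (hbd : Bornology.IsBounded {x : Fin n → ℝ | ∀ i, A i ⬝ᵥ x ≥ b i})
    (vc : Fin n → ℝ) (hvc : ∀ i, A i ⬝ᵥ vc > b i)
    (hmin : ∀ x : Fin n → ℝ, (∀ i, A i ⬝ᵥ x > b i) → Fvol A b vc ≤ Fvol A b x)
    (y : Fin n → ℝ) (hy : ∀ i, A i ⬝ᵥ y ≥ b i) :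
    (y - vc) ⬝ᵥ (Hmat A b vc) *ᵥ (y - vc) ≤ 4 * (m : ℝ) ^ 3 * (n : ℝ) ^ 2 := by
  have hA : Function.Injective A.mulVec := mulVec_injective_of_isBounded hbd fun i => (hvc i).le
  have hH : (Hmat A b vc).PosDef := Hmat_posDef hvc hA
  have ht : ∀ i, -1 ≤ (A i ⬝ᵥ (y - vc)) / (A i ⬝ᵥ vc - b i) := fun i => by
    rw [le_div_iff₀ (sub_pos.2 (hvc i)), dotProduct_sub]
    linarith [hy i]
  have hcs := sq_div_slack_le_leverageScore_mul hH (y - vc)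
  rw [dotProduct_Hmat_mulVec_self] at hcs ⊢
  simpa using sum_sq_le_of_sum_mul_eq_zero (leverageScore_nonneg hH) (sum_leverageScore hH).le ht
    (sum_leverageScore_mul_eq_zero hvc hA hmin (y - vc)) hcs
end

section
/- Let K = {x ∈ ℝ^n : Ax ≥ b} be a bounded polytope with nonempty interior (A ∈ ℝ^{m×n} with rows a_1ᵀ,…,a_mᵀ, b ∈ ℝ^m, A of rank n), and let x be an interior point of K. Then (1/(4m)) · H(x) ⪯ Q(x) ⪯ H(x), and moreover (min_{i∈[m]} σ_i(x)) · H(x) ⪯ Q(x), where M ⪯ N means N − M is positive semidefinite. (Equivalently, the largest λ with Q(x) ⪰ λ H(x) satisfies 1/(4m) ≤ λ and λ ≥ min_i σ_i(x), and λ ≤ 1.) -/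
open Matrix

/-- The leverage scores `σᵢ(x) = aᵢᵀ H(x)⁻¹ aᵢ / (aᵢᵀ x - bᵢ)²`. -/
noncomputable def lev {m n : ℕ} (A : Matrix (Fin m) (Fin n) ℝ) (b : Fin m → ℝ)
    (x : Fin n → ℝ) (i : Fin m) : ℝ :=
  (A i ⬝ᵥ (Hmat A b x)⁻¹ *ᵥ A i) / (A i ⬝ᵥ x - b i) ^ 2

/-- The matrix `Q(x) = ∑ i, σᵢ(x) aᵢ aᵢᵀ / (aᵢᵀ x - bᵢ)²`. -/
noncomputable def Qmat {m n : ℕ} (A : Matrix (Fin m) (Fin n) ℝ) (b : Fin m → ℝ)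
    (x : Fin n → ℝ) : Matrix (Fin n) (Fin n) ℝ :=
  ∑ i, (lev A b x i / (A i ⬝ᵥ x - b i) ^ 2) • Matrix.vecMulVec (A i) (A i)

/-! Write `H = ∑ᵢ cᵢ aᵢ aᵢᵀ` with `cᵢ > 0` and `σᵢ = cᵢ aᵢᵀ H⁻¹ aᵢ`, so that `Q = ∑ᵢ σᵢ cᵢ aᵢ aᵢᵀ`.
Everything is compared through the quadratic forms `vᵀ H v = ∑ᵢ hᵢ` and `vᵀ Q v = ∑ᵢ σᵢ hᵢ`,
where `hᵢ = cᵢ (aᵢᵀ v)²`. Cauchy–Schwarz in the `H`-inner product gives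
`(aᵢᵀ v)² ≤ (aᵢᵀ H⁻¹ aᵢ) (vᵀ H v)`, i.e. `hᵢ ≤ σᵢ ∑ⱼ hⱼ`. At `v = H⁻¹ aᵢ` the `i`-th term
alone gives `cᵢ qᵢ² ≤ vᵀ H v = qᵢ` for `qᵢ = aᵢᵀ H⁻¹ aᵢ`, so `σᵢ ≤ 1` and `Q ⪯ H`. Summing
`hᵢ² ≤ σᵢ hᵢ ∑ⱼ hⱼ` against `(∑ᵢ hᵢ)² ≤ m ∑ᵢ hᵢ²` yields `vᵀ H v ≤ m vᵀ Q v`, i.e. `H / m ⪯ Q`, which is stronger than the bound with `4m`. -/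

theorem Finset.inv_card_mul_sum_le_sum_mul {ι : Type*} [Fintype ι] {h s : ι → ℝ} (hh : 0 ≤ h)
    (hs : ∀ i, h i ≤ s i * ∑ j, h j) :
    (Fintype.card ι : ℝ)⁻¹ * ∑ i, h i ≤ ∑ i, s i * h i := by
  set S := ∑ i, h i
  have hS : 0 ≤ S := Finset.sum_nonneg fun i _ => hh i
  rcases hS.eq_or_lt with hS0 | hSpos
  · have hzero : ∀ i, h i = 0 := fun i => le_antisymm (by simpa [← hS0] using hs i) (hh i)
    simp [← hS0, hzero]
  have key : S * S ≤ S * (Fintype.card ι * ∑ i, s i * h i) := calc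
    S * S = S ^ 2 := (sq S).symm
    _ ≤ Fintype.card ι * ∑ i, h i ^ 2 := by
      simpa using sq_sum_le_card_mul_sum_sq (s := .univ) (f := h)
    _ ≤ Fintype.card ι * ∑ i, s i * S * h i := by
      gcongr with i
      rw [sq]
      exact mul_le_mul_of_nonneg_right (hs i) (hh i)
    _ = S * (Fintype.card ι * ∑ i, s i * h i) := by
      rw [Finset.mul_sum, Finset.mul_sum, Finset.mul_sum]
      congr! 1 with i
      ring
  have hcard : (0 : ℝ) < Fintype.card ι := by
    obtain ⟨i, -, -⟩ := Finset.exists_ne_zero_of_sum_ne_zero hSpos.ne'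
    exact_mod_cast Fintype.card_pos_iff.mpr ⟨i⟩
  rw [inv_mul_le_iff₀ hcard]
  exact le_of_mul_le_mul_left key hSpos

namespace Matrix

theorem mulVec_injective_of_rank_eq_card {m n K : Type*} [Fintype m] [Fintype n]
    [Field K] {A : Matrix m n K} (hA : A.rank = Fintype.card n) :
    Function.Injective A.mulVec := by
  have hker : Module.finrank K (LinearMap.ker A.mulVecLin) = 0 := by
    have := LinearMap.finrank_range_add_finrank_ker A.mulVecLin
    rw [Module.finrank_fintype_fun_eq_card, ← Matrix.rank, hA] at this
    omega
  exact LinearMap.ker_eq_bot.mp (Submodule.finrank_eq_zero.mp hker)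

theorem PosSemidef.sub_smul_of_le {n : Type*} {Q H : Matrix n n ℝ} {r s : ℝ}
    (hQ : (Q - r • H).PosSemidef) (hH : H.PosSemidef) (hsr : s ≤ r) :
    (Q - s • H).PosSemidef := by
  have : Q - s • H = (Q - r • H) + (r - s) • H := by rw [sub_smul]; abel
  exact this ▸ hQ.add (hH.smul (sub_nonneg.2 hsr))

section Quadratic

variable {n : Type*} [Fintype n]

theorem PosSemidef.sq_dotProduct_mulVec_le {H : Matrix n n ℝ} (hH : H.PosSemidef)
    (v w : n → ℝ) : (v ⬝ᵥ H *ᵥ w) ^ 2 ≤ (v ⬝ᵥ H *ᵥ v) * (w ⬝ᵥ H *ᵥ w) := by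
  have hsymm : w ⬝ᵥ H *ᵥ v = v ⬝ᵥ H *ᵥ w := by
    rw [dotProduct_mulVec, ← mulVec_transpose, ← conjTranspose_eq_transpose_of_trivial,
      hH.isHermitian.eq, dotProduct_comm]
  have hquad : ∀ t : ℝ,
      0 ≤ (w ⬝ᵥ H *ᵥ w) * (t * t) + -(2 * (v ⬝ᵥ H *ᵥ w)) * t + v ⬝ᵥ H *ᵥ v := by
    intro t
    have := hH.dotProduct_mulVec_nonneg (v - t • w)
    simp only [star_trivial, mulVec_sub, mulVec_smul, sub_dotProduct, dotProduct_sub,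
      smul_dotProduct, dotProduct_smul, smul_eq_mul, hsymm] at this
    linarith
  have := discrim_le_zero hquad
  rw [discrim] at this
  nlinarith

theorem PosDef.sq_dotProduct_le [DecidableEq n] {H : Matrix n n ℝ} (hH : H.PosDef)
    (u v : n → ℝ) : (u ⬝ᵥ v) ^ 2 ≤ (u ⬝ᵥ H⁻¹ *ᵥ u) * (v ⬝ᵥ H *ᵥ v) := by
  have hHw : H *ᵥ (H⁻¹ *ᵥ u) = u := by
    rw [mulVec_mulVec, mul_nonsing_inv _ ((isUnit_iff_isUnit_det H).mp hH.isUnit), one_mulVec]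
  have := hH.posSemidef.sq_dotProduct_mulVec_le v (H⁻¹ *ᵥ u)
  rwa [hHw, dotProduct_comm v, dotProduct_comm _ u, mul_comm] at this

end Quadratic

section WeightedGram

variable {ι n : Type*} [Fintype ι] (A : Matrix ι n ℝ)

/-- `Aᵀ diag(c) A`, as a sum of rank-one matrices over the rows of `A`. -/
noncomputable def weightedGram (c : ι → ℝ) : Matrix n n ℝ :=
  ∑ i, c i • vecMulVec (A i) (A i)

theorem weightedGram_sub (c d : ι → ℝ) :
    weightedGram A c - weightedGram A d = weightedGram A (c - d) := by
  simp only [weightedGram, ← Finset.sum_sub_distrib, Pi.sub_apply, sub_smul]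

theorem smul_weightedGram (r : ℝ) (c : ι → ℝ) :
    r • weightedGram A c = weightedGram A (r • c) := by
  simp only [weightedGram, Finset.smul_sum, smul_smul, Pi.smul_apply, smul_eq_mul]

variable [Fintype n]

theorem isHermitian_weightedGram (c : ι → ℝ) : (weightedGram A c).IsHermitian :=
  isSelfAdjoint_sum _ fun i _ =>
    (IsSelfAdjoint.all (c i)).smul (posSemidef_vecMulVec_self_star (A i)).isHermitian

theorem dotProduct_weightedGram_mulVec (c : ι → ℝ) (v : n → ℝ) :
    v ⬝ᵥ weightedGram A c *ᵥ v = ∑ i, c i * (A i ⬝ᵥ v) ^ 2 := by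
  simp only [weightedGram, sum_mulVec, dotProduct_sum, smul_mulVec, dotProduct_smul,
    vecMulVec_mulVec, op_smul_eq_smul, smul_eq_mul]
  refine Finset.sum_congr rfl fun i _ => ?_
  rw [dotProduct_comm v]
  ring

theorem posSemidef_weightedGram_sub_iff {c d : ι → ℝ} :
    (weightedGram A c - weightedGram A d).PosSemidef ↔
      ∀ v, ∑ i, d i * (A i ⬝ᵥ v) ^ 2 ≤ ∑ i, c i * (A i ⬝ᵥ v) ^ 2 := by
  simp only [weightedGram_sub, posSemidef_iff_dotProduct_mulVec, isHermitian_weightedGram,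
    true_and, star_trivial, dotProduct_weightedGram_mulVec, Pi.sub_apply, sub_mul,
    Finset.sum_sub_distrib, sub_nonneg]

theorem posSemidef_weightedGram_sub_of_le {c d : ι → ℝ} (hdc : d ≤ c) :
    (weightedGram A c - weightedGram A d).PosSemidef :=
  (posSemidef_weightedGram_sub_iff A).2 fun _ =>
    Finset.sum_le_sum fun i _ => mul_le_mul_of_nonneg_right (hdc i) (sq_nonneg _)

theorem posDef_weightedGram {c : ι → ℝ} (hc : ∀ i, 0 < c i) (hA : Function.Injective A.mulVec) :
    (weightedGram A c).PosDef := by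
  refine posDef_iff_dotProduct_mulVec.2 ⟨isHermitian_weightedGram A c, fun v hv => ?_⟩
  obtain ⟨i, hi⟩ : ∃ i, A i ⬝ᵥ v ≠ 0 := by
    by_contra! h
    exact hv (hA (funext h |>.trans (mulVec_zero A).symm))
  rw [star_trivial, dotProduct_weightedGram_mulVec]
  exact Finset.sum_pos' (fun j _ => mul_nonneg (hc j).le (sq_nonneg _))
    ⟨i, Finset.mem_univ i, mul_pos (hc i) (by positivity)⟩

variable [DecidableEq n]

noncomputable def leverage (c : ι → ℝ) (i : ι) : ℝ :=
  c i * (A i ⬝ᵥ (weightedGram A c)⁻¹ *ᵥ A i)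

variable {A}

theorem mul_sq_dotProduct_le_leverage_mul {c : ι → ℝ} (hc : 0 ≤ c)
    (hH : (weightedGram A c).PosDef) (i : ι) (v : n → ℝ) :
    c i * (A i ⬝ᵥ v) ^ 2 ≤ leverage A c i * (v ⬝ᵥ weightedGram A c *ᵥ v) := by
  rw [leverage, mul_assoc]
  exact mul_le_mul_of_nonneg_left (hH.sq_dotProduct_le (A i) v) (hc i)

theorem leverage_le_one {c : ι → ℝ} (hc : 0 ≤ c) (hH : (weightedGram A c).PosDef) (i : ι) :
    leverage A c i ≤ 1 := by
  set w := (weightedGram A c)⁻¹ *ᵥ A i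
  have hHw : weightedGram A c *ᵥ w = A i := by
    rw [mulVec_mulVec, mul_nonsing_inv _ ((isUnit_iff_isUnit_det _).mp hH.isUnit), one_mulVec]
  have hq : c i * (A i ⬝ᵥ w) ^ 2 ≤ A i ⬝ᵥ w := by
    have := Finset.single_le_sum (f := fun j => c j * (A j ⬝ᵥ w) ^ 2)
      (fun j _ => mul_nonneg (hc j) (sq_nonneg _)) (Finset.mem_univ i)
    rwa [← dotProduct_weightedGram_mulVec, hHw, dotProduct_comm w] at this
  have hq0 : 0 ≤ A i ⬝ᵥ w := by
    simpa only [star_trivial] using hH.inv.posSemidef.dotProduct_mulVec_nonneg (A i)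
  change c i * (A i ⬝ᵥ w) ≤ 1
  rcases hq0.eq_or_lt with h0 | hpos
  · rw [← h0, mul_zero]
    exact zero_le_one
  · exact le_of_mul_le_mul_right (by rwa [one_mul, mul_assoc, ← sq]) hpos

theorem posSemidef_weightedGram_sub_weightedGram_leverage_mul {c : ι → ℝ} (hc : 0 ≤ c)
    (hH : (weightedGram A c).PosDef) :
    (weightedGram A c - weightedGram A (leverage A c * c)).PosSemidef :=
  posSemidef_weightedGram_sub_of_le A fun i =>
    mul_le_of_le_one_left (hc i) (leverage_le_one hc hH i)

theorem posSemidef_weightedGram_leverage_mul_sub_iInf_smul {c : ι → ℝ} (hc : 0 ≤ c) :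
    (weightedGram A (leverage A c * c) -
      (⨅ i, leverage A c i) • weightedGram A c).PosSemidef := by
  rw [smul_weightedGram]
  exact posSemidef_weightedGram_sub_of_le A fun i =>
    mul_le_mul_of_nonneg_right (ciInf_le (Set.finite_range _).bddBelow i) (hc i)

theorem posSemidef_weightedGram_leverage_mul_sub_inv_card_smul {c : ι → ℝ} (hc : 0 ≤ c)
    (hH : (weightedGram A c).PosDef) :
    (weightedGram A (leverage A c * c) -
      (Fintype.card ι : ℝ)⁻¹ • weightedGram A c).PosSemidef := by
  rw [smul_weightedGram, posSemidef_weightedGram_sub_iff]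
  intro v
  have := Finset.inv_card_mul_sum_le_sum_mul (h := fun i => c i * (A i ⬝ᵥ v) ^ 2)
    (s := leverage A c) (fun i => mul_nonneg (hc i) (sq_nonneg _)) fun i => by
      rw [← dotProduct_weightedGram_mulVec]
      exact mul_sq_dotProduct_le_leverage_mul hc hH i v
  simpa only [Pi.smul_apply, Pi.mul_apply, smul_eq_mul, Finset.mul_sum, mul_assoc] using this

end WeightedGram

end Matrix

theorem Q_hessian_loewner_bounds_general {m n : ℕ} (A : Matrix (Fin m) (Fin n) ℝ)
    (b : Fin m → ℝ) (hrank : A.rank = n)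
    (x : Fin n → ℝ) (hx : ∀ i, A i ⬝ᵥ x > b i) :
    (Qmat A b x - (4 * (m : ℝ))⁻¹ • Hmat A b x).PosSemidef ∧
    (Hmat A b x - Qmat A b x).PosSemidef ∧
    (Qmat A b x - (⨅ i : Fin m, lev A b x i) • Hmat A b x).PosSemidef := by
  set c : Fin m → ℝ := fun i => ((A i ⬝ᵥ x - b i) ^ 2)⁻¹
  have hc : ∀ i, 0 < c i := fun i => by have := sub_pos.2 (hx i); positivity
  have hc0 : 0 ≤ c := fun i => (hc i).le
  have hH : Hmat A b x = weightedGram A c := rfl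
  have hlev : lev A b x = leverage A c := funext fun i => by
    rw [lev, leverage, ← hH, div_eq_mul_inv, mul_comm]
  have hQ : Qmat A b x = weightedGram A (leverage A c * c) := by
    simp only [Qmat, hlev, div_eq_mul_inv]
    rfl
  have hpos : (weightedGram A c).PosDef :=
    posDef_weightedGram A hc (mulVec_injective_of_rank_eq_card (by rw [hrank, Fintype.card_fin]))
  have hlower := posSemidef_weightedGram_leverage_mul_sub_inv_card_smul hc0 hpos
  rw [Fintype.card_fin] at hlower
  rw [hQ, hlev, hH]
  refine ⟨hlower.sub_smul_of_le hpos.posSemidef ?_,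
    posSemidef_weightedGram_sub_weightedGram_leverage_mul hc0 hpos,
    posSemidef_weightedGram_leverage_mul_sub_iInf_smul hc0⟩
  rw [mul_inv]
  linarith [inv_nonneg.2 (Nat.cast_nonneg (α := ℝ) m)]

/-- For a bounded full-dimensional polytope `{x | Ax ≥ b}` with nonempty interior and any
interior point `x`, `(1/(4m)) H(x) ⪯ Q(x) ⪯ H(x)` and `(minᵢ σᵢ(x)) H(x) ⪯ Q(x)`. -/
theorem Q_hessian_loewner_bounds {m n : ℕ} (A : Matrix (Fin m) (Fin n) ℝ)
    (b : Fin m → ℝ) (hrank : A.rank = n)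
    (hbd : Bornology.IsBounded {x : Fin n → ℝ | ∀ i, A i ⬝ᵥ x ≥ b i})
    (x : Fin n → ℝ) (hx : ∀ i, A i ⬝ᵥ x > b i) :
    (Qmat A b x - (4 * (m : ℝ))⁻¹ • Hmat A b x).PosSemidef ∧
    (Hmat A b x - Qmat A b x).PosSemidef ∧
    (Qmat A b x - (⨅ i : Fin m, lev A b x i) • Hmat A b x).PosSemidef :=
  Q_hessian_loewner_bounds_general A b hrank x hx
end

section
/- Let K = {x ∈ ℝ^n : Ax ≥ b} be a bounded polytope with nonempty interior, where A ∈ ℝ^{m×n} has rows a_1ᵀ,…,a_mᵀ and b ∈ ℝ^m, and let x* be the analytic center of K, i.e., the minimizer of the log-barrier φ(x) = Σ_{i=1}^m −ln(a_iᵀx − b_i) over the interior of K. Then K ⊆ {x ∈ ℝ^n : (x − x*)ᵀ H(x*) (x − x*) ≤ m²}; that is, every y ∈ K satisfies (y − x*)ᵀ H(x*) (y − x*) ≤ m². -/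
open Matrix

/-- The log-barrier `φ(x) = ∑ i, -ln(aᵢᵀx - bᵢ)`. -/
noncomputable def logBarrier {m n : ℕ} (A : Matrix (Fin m) (Fin n) ℝ) (b : Fin m → ℝ)
    (x : Fin n → ℝ) : ℝ :=
  ∑ i, -Real.log (A i ⬝ᵥ x - b i)

/-!
With slacks `sᵢ = aᵢᵀx* - bᵢ > 0` and `uᵢ = aᵢᵀ(y - x*) / sᵢ`, the Hessian form at `x*` is
`∑ uᵢ²`. Since `y ∈ K`, every `uᵢ ≥ -1`, and since `x*` minimises `φ` over the open interior,
the derivative of `φ` along `y - x*` vanishes, i.e. `∑ uᵢ = 0`. Then the `1 + uᵢ` are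
nonnegative with sum `m`, so `m + ∑ uᵢ² = ∑ (1 + uᵢ)² ≤ (∑ (1 + uᵢ))² = m²`.
-/

theorem Finset.sum_sq_le_card_sq_sub_card {ι : Type*} (s : Finset ι) {u : ι → ℝ}
    (hu : ∀ i ∈ s, -1 ≤ u i) (hsum : ∑ i ∈ s, u i = 0) :
    ∑ i ∈ s, u i ^ 2 ≤ (s.card : ℝ) ^ 2 - s.card := by
  have hshift : ∑ i ∈ s, (1 + u i) ^ 2 ≤ (∑ i ∈ s, (1 + u i)) ^ 2 :=
    Finset.sum_sq_le_sq_sum_of_nonneg fun i hi => by linarith [hu i hi]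
  have hexpand : ∀ i, (1 + u i) ^ 2 = 1 + 2 * u i + u i ^ 2 := fun i => by ring
  simp only [hexpand, Finset.sum_add_distrib, ← Finset.mul_sum, hsum, Finset.sum_const,
    nsmul_eq_mul, mul_one] at hshift
  linarith

section Polytope

variable {m n : ℕ} (A : Matrix (Fin m) (Fin n) ℝ) (b : Fin m → ℝ)

theorem dotProduct_Hmat_mulVec (x d : Fin n → ℝ) :
    d ⬝ᵥ Hmat A b x *ᵥ d = ∑ i, ((A i ⬝ᵥ d) / (A i ⬝ᵥ x - b i)) ^ 2 := by
  simp only [Hmat, Matrix.sum_mulVec, dotProduct_sum, smul_mulVec, vecMulVec_mulVec,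
    dotProduct_smul, smul_eq_mul, op_smul_eq_mul, dotProduct_comm d (A _)]
  refine Finset.sum_congr rfl fun i _ => ?_
  rw [div_pow]
  ring

theorem isOpen_setOf_forall_lt_dotProduct : IsOpen {x : Fin n → ℝ | ∀ i, b i < A i ⬝ᵥ x} := by
  simp only [Set.ofPred_forall]
  exact isOpen_iInter_of_finite fun i =>
    isOpen_lt continuous_const (continuous_const.dotProduct continuous_id)

theorem hasDerivAt_logBarrier_add_smul {x : Fin n → ℝ} (hx : ∀ i, A i ⬝ᵥ x ≠ b i)
    (d : Fin n → ℝ) :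
    HasDerivAt (fun ε : ℝ => logBarrier A b (x + ε • d))
      (-∑ i, (A i ⬝ᵥ d) / (A i ⬝ᵥ x - b i)) 0 := by
  have hline : ∀ ε : ℝ, ∀ i, A i ⬝ᵥ (x + ε • d) - b i = (A i ⬝ᵥ x - b i) + ε * (A i ⬝ᵥ d) :=
    fun ε i => by rw [dotProduct_add, dotProduct_smul, smul_eq_mul]; ring
  simp only [logBarrier, hline, ← Finset.sum_neg_distrib]
  refine HasDerivAt.fun_sum fun i _ => ?_
  have hslack : (A i ⬝ᵥ x - b i) + 0 * (A i ⬝ᵥ d) ≠ 0 := by simpa [sub_eq_zero] using hx i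
  simpa using (((hasDerivAt_mul_const (A i ⬝ᵥ d)).const_add _).log hslack).fun_neg

/-- The gradient `-∑ aᵢ / sᵢ` of the log-barrier vanishes at its minimiser over the open interior. -/
theorem sum_dotProduct_div_slack_eq_zero {xs : Fin n → ℝ} (hxs : ∀ i, b i < A i ⬝ᵥ xs)
    (hmin : ∀ x : Fin n → ℝ, (∀ i, b i < A i ⬝ᵥ x) → logBarrier A b xs ≤ logBarrier A b x)
    (d : Fin n → ℝ) :
    ∑ i, (A i ⬝ᵥ d) / (A i ⬝ᵥ xs - b i) = 0 := by
  have hnhds : ∀ᶠ ε : ℝ in nhds 0, ∀ i, b i < A i ⬝ᵥ (xs + ε • d) := by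
    have hcont : Continuous fun ε : ℝ => xs + ε • d := by fun_prop
    refine hcont.continuousAt.preimage_mem_nhds ((isOpen_setOf_forall_lt_dotProduct A b).mem_nhds ?_)
    simpa using hxs
  have hlocal : IsLocalMin (fun ε : ℝ => logBarrier A b (xs + ε • d)) 0 := by
    filter_upwards [hnhds] with ε hε
    simpa using hmin _ hε
  exact neg_eq_zero.mp
    (hlocal.hasDerivAt_eq_zero (hasDerivAt_logBarrier_add_smul A b (fun i => (hxs i).ne') d))

end Polytope

theorem polytope_subset_dikin_of_analytic_center_general {m n : ℕ}
    (A : Matrix (Fin m) (Fin n) ℝ) (b : Fin m → ℝ)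
    (xs : Fin n → ℝ) (hxs : ∀ i, A i ⬝ᵥ xs > b i)
    (hmin : ∀ x : Fin n → ℝ, (∀ i, A i ⬝ᵥ x > b i) →
      logBarrier A b xs ≤ logBarrier A b x)
    (y : Fin n → ℝ) (hy : ∀ i, A i ⬝ᵥ y ≥ b i) :
    (y - xs) ⬝ᵥ (Hmat A b xs) *ᵥ (y - xs) ≤ (m : ℝ) ^ 2 := by
  have hge : ∀ i ∈ Finset.univ, -1 ≤ (A i ⬝ᵥ (y - xs)) / (A i ⬝ᵥ xs - b i) := by
    intro i _
    rw [le_div_iff₀ (sub_pos.mpr (hxs i)), dotProduct_sub]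
    linarith [hy i]
  have hsum := sum_dotProduct_div_slack_eq_zero A b hxs hmin (y - xs)
  have hbound := Finset.univ.sum_sq_le_card_sq_sub_card hge hsum
  rw [Finset.card_univ, Fintype.card_fin] at hbound
  rw [dotProduct_Hmat_mulVec]
  linarith [(m.cast_nonneg : (0 : ℝ) ≤ m)]

/-- A bounded polytope `K = {x | Ax ≥ b}` with nonempty interior and analytic center `x*`
(the minimizer of the log-barrier over the interior) satisfies
`K ⊆ {x : (x - x*)ᵀ H(x*) (x - x*) ≤ m²}`. -/
theorem polytope_subset_dikin_of_analytic_center {m n : ℕ}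
    (A : Matrix (Fin m) (Fin n) ℝ) (b : Fin m → ℝ)
    (hbd : Bornology.IsBounded {x : Fin n → ℝ | ∀ i, A i ⬝ᵥ x ≥ b i})
    (xs : Fin n → ℝ) (hxs : ∀ i, A i ⬝ᵥ xs > b i)
    (hmin : ∀ x : Fin n → ℝ, (∀ i, A i ⬝ᵥ x > b i) →
      logBarrier A b xs ≤ logBarrier A b x)
    (y : Fin n → ℝ) (hy : ∀ i, A i ⬝ᵥ y ≥ b i) :
    (y - xs) ⬝ᵥ (Hmat A b xs) *ᵥ (y - xs) ≤ (m : ℝ) ^ 2 :=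
  polytope_subset_dikin_of_analytic_center_general A b xs hxs hmin y hy
end
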